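/- Let Θ be a finite set with at least two elements and let (β_{ij})_{i≠j} and (β'_{ij})_{i≠j} be two families of nonnegative real numbers. Suppose that Σ_{i≠j} β_{ij} D(μ_i‖μ_j) = Σ_{i≠j} β'_{ij} D(μ_i‖μ_j) for every family (μ_i)_{i∈Θ} of mutually absolutely continuous Borel probability measures on ℝ with all divergences D(μ_i‖μ_j) finite. Then β_{ij} = β'_{ij} for all i ≠ j. -/
import Mathlib

open MeasureTheory Finset
open scoped ENNReal

noncomputable def twoPt (p : ℝ) : Measure ℝ :=
  ENNReal.ofReal p • Measure.dirac 0 + ENNReal.ofReal (1-p) • Measure.dirac 1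

noncomputable def rnd (p q : ℝ) : ℝ → ℝ≥0∞ :=
  fun s => if s = 0 then ENNReal.ofReal (p/q) else ENNReal.ofReal ((1-p)/(1-q))

lemma rnd_measurable (p q : ℝ) : Measurable (rnd p q) :=
  Measurable.ite (measurableSet_eq) measurable_const measurable_const

lemma twoPt_prob {p : ℝ} (h0 : 0 < p) (h1 : p < 1) : IsProbabilityMeasure (twoPt p) := by
  constructor
  simp [twoPt, Measure.add_apply, Measure.smul_apply, Measure.dirac_apply_of_mem,
    Set.mem_univ, smul_eq_mul, mul_one]
  rw [← ENNReal.ofReal_add h0.le (by linarith)]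
  norm_num

lemma withDensity_dirac {g : ℝ → ℝ≥0∞} (hg : Measurable g) (a : ℝ) :
    (Measure.dirac a).withDensity g = g a • Measure.dirac a := by
  classical
  ext s hs
  rw [withDensity_apply _ hs, setLIntegral_dirac' hg hs, Measure.smul_apply,
    Measure.dirac_apply' _ hs, smul_eq_mul]
  by_cases h : a ∈ s <;> simp [h]

lemma twoPt_eq_withDensity {p q : ℝ} (hp0 : 0 < p) (hp1 : p < 1) (hq0 : 0 < q) (hq1 : q < 1) :
    twoPt p = (twoPt q).withDensity (rnd p q) := by
  simp only [twoPt]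
  rw [withDensity_add_measure, withDensity_smul_measure, withDensity_smul_measure,
    withDensity_dirac (rnd_measurable p q), withDensity_dirac (rnd_measurable p q)]
  have h0 : rnd p q 0 = ENNReal.ofReal (p/q) := by simp [rnd]
  have h1 : rnd p q 1 = ENNReal.ofReal ((1-p)/(1-q)) := by norm_num [rnd]
  rw [h0, h1, smul_smul, smul_smul, ← ENNReal.ofReal_mul hq0.le,
    ← ENNReal.ofReal_mul (by linarith : (0:ℝ) ≤ 1 - q),
    mul_div_cancel₀ _ hq0.ne', mul_div_cancel₀ _ (by linarith : (1:ℝ) - q ≠ 0)]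

lemma twoPt_ac {p q : ℝ} (hp0 : 0 < p) (hp1 : p < 1) (hq0 : 0 < q) (hq1 : q < 1) :
    twoPt p ≪ twoPt q := by
  rw [twoPt_eq_withDensity hp0 hp1 hq0 hq1]
  exact withDensity_absolutelyContinuous _ _

lemma twoPt_rnDeriv {p q : ℝ} (hp0 : 0 < p) (hp1 : p < 1) (hq0 : 0 < q) (hq1 : q < 1) :
    (twoPt p).rnDeriv (twoPt q) =ᵐ[twoPt q] rnd p q := by
  haveI := twoPt_prob hq0 hq1
  rw [twoPt_eq_withDensity hp0 hp1 hq0 hq1]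
  exact Measure.rnDeriv_withDensity _ (rnd_measurable p q)

noncomputable def Dkl (p q : ℝ) : ℝ :=
  p * Real.log (p/q) + (1-p) * Real.log ((1-p)/(1-q))

lemma ite_integrable {c1 c2 : ℝ} (μ : Measure ℝ) [IsFiniteMeasure μ] :
    Integrable (fun s : ℝ => if s = 0 then c1 else c2) μ := by
  refine (integrable_const (max |c1| |c2|)).mono' ?_ ?_
  · exact (Measurable.ite measurableSet_eq measurable_const
      measurable_const).aestronglyMeasurable
  · refine ae_of_all _ fun s => ?_
    by_cases h : s = 0
    · simp only [Real.norm_eq_abs, if_pos h]; exact le_max_left _ _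
    · simp only [Real.norm_eq_abs, if_neg h]; exact le_max_right _ _

lemma twoPt_log_ae {p q : ℝ} (hp0 : 0 < p) (hp1 : p < 1) (hq0 : 0 < q) (hq1 : q < 1) :
    (fun s => Real.log (((twoPt p).rnDeriv (twoPt q)) s).toReal)
      =ᵐ[twoPt p] (fun s => if s = 0 then Real.log (p/q) else Real.log ((1-p)/(1-q))) := by
  have hae := (twoPt_rnDeriv hp0 hp1 hq0 hq1).filter_mono
    (twoPt_ac hp0 hp1 hq0 hq1).ae_le
  filter_upwards [hae] with s hs
  rw [hs]
  by_cases h : s = 0 <;>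
    simp [rnd, h, ENNReal.toReal_ofReal (div_nonneg hp0.le hq0.le),
      ENNReal.toReal_ofReal
        (div_nonneg (by linarith : (0:ℝ) ≤ 1-p) (by linarith : (0:ℝ) ≤ 1-q))]

lemma twoPt_logrn_integrable {p q : ℝ} (hp0 : 0 < p) (hp1 : p < 1) (hq0 : 0 < q) (hq1 : q < 1) :
    Integrable (fun s => Real.log (((twoPt p).rnDeriv (twoPt q)) s).toReal) (twoPt p) := by
  haveI := twoPt_prob hp0 hp1
  exact (ite_integrable (twoPt p)).congr (twoPt_log_ae hp0 hp1 hq0 hq1).symm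

lemma twoPt_integral {p q : ℝ} (hp0 : 0 < p) (hp1 : p < 1) (hq0 : 0 < q) (hq1 : q < 1) :
    ∫ s, Real.log (((twoPt p).rnDeriv (twoPt q)) s).toReal ∂(twoPt p) = Dkl p q := by
  haveI := twoPt_prob hp0 hp1
  rw [integral_congr_ae (twoPt_log_ae hp0 hp1 hq0 hq1)]
  haveI h0 : IsFiniteMeasure (ENNReal.ofReal p • Measure.dirac (0:ℝ)) := by
    constructor
    simp [Measure.smul_apply, lt_top_iff_ne_top]
  haveI h1 : IsFiniteMeasure (ENNReal.ofReal (1-p) • Measure.dirac (1:ℝ)) := by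
    constructor
    simp [Measure.smul_apply, lt_top_iff_ne_top]
  simp only [twoPt]
  rw [integral_add_measure (ite_integrable _) (ite_integrable _),
    integral_smul_measure, integral_smul_measure, integral_dirac, integral_dirac]
  norm_num [ENNReal.toReal_ofReal hp0.le,
    ENNReal.toReal_ofReal (by linarith : (0:ℝ) ≤ 1-p), Dkl]

lemma Dkl_half_half : Dkl (1/2) (1/2) = 0 := by norm_num [Dkl]

lemma Dkl_bracket {x y : ℝ} (hx0 : 0 < x) (hx1 : x < 1) (hy0 : 0 < y) (hy1 : y < 1) :
    Dkl x y - Dkl x (1/2) - Dkl (1/2) y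
      = (1/2 - x) * (Real.log y - Real.log (1-y)) := by
  have h2 : (1:ℝ) - 1/2 = 1/2 := by norm_num
  simp only [Dkl, h2]
  rw [Real.log_div hx0.ne' hy0.ne',
      Real.log_div (by linarith : (0:ℝ) < 1-x).ne' (by linarith : (0:ℝ) < 1-y).ne',
      Real.log_div hx0.ne' (by norm_num : (1:ℝ)/2 ≠ 0),
      Real.log_div (by linarith : (0:ℝ) < 1-x).ne' (by norm_num : (1:ℝ)/2 ≠ 0),
      Real.log_div (by norm_num : (1:ℝ)/2 ≠ 0) hy0.ne',
      Real.log_div (by norm_num : (1:ℝ)/2 ≠ 0) (by linarith : (0:ℝ) < 1-y).ne']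
  ring

lemma log_c1 : Real.log ((1:ℝ)/4) - Real.log (1 - 1/4) = -Real.log 3 := by
  rw [show (1:ℝ) - 1/4 = 3/4 by norm_num,
    ← Real.log_div (by norm_num) (by norm_num),
    show ((1:ℝ)/4)/(3/4) = (3:ℝ)⁻¹ by norm_num, Real.log_inv]

lemma log_c2 : Real.log ((1:ℝ)/10) - Real.log (1 - 1/10) = -(2 * Real.log 3) := by
  rw [show (1:ℝ) - 1/10 = 9/10 by norm_num,
    ← Real.log_div (by norm_num) (by norm_num),
    show ((1:ℝ)/10)/(9/10) = (9:ℝ)⁻¹ by norm_num, Real.log_inv,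
    show (9:ℝ) = 3^2 by norm_num, Real.log_pow]
  push_cast
  ring

noncomputable def Pfun {Θ : Type*} [DecidableEq Θ] (i j : Θ) (x y : ℝ) (k : Θ) : ℝ :=
  if k = i then x else if k = j then y else 1/2

section Pf
variable {Θ : Type*} [DecidableEq Θ] {i j k : Θ} {x y : ℝ}

lemma Pfun_i : Pfun i j x y i = x := if_pos rfl
lemma Pfun_j (hji : j ≠ i) : Pfun i j x y j = y := by simp [Pfun, hji]
lemma Pfun_other (hki : k ≠ i) (hkj : k ≠ j) : Pfun i j x y k = 1/2 := by
  simp [Pfun, hki, hkj]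

lemma Pfun_pos (hx0 : 0 < x) (hy0 : 0 < y) : 0 < Pfun i j x y k := by
  unfold Pfun; split_ifs <;> norm_num <;> assumption

lemma Pfun_lt (hx1 : x < 1) (hy1 : y < 1) : Pfun i j x y k < 1 := by
  unfold Pfun; split_ifs <;> norm_num <;> assumption

end Pf

/-- Uniqueness of the LLR-cost coefficients: if two nonnegative
families `β`, `β'` give the same cost `Σ_{i≠j} β_{ij} D(μ_i‖μ_j)` for every family of
mutually absolutely continuous Borel probability measures on `ℝ` with all divergences
finite (i.e. with integrable log-likelihood ratios), then `β = β'` off the diagonal. -/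
theorem stmt17 {Θ : Type*} [Fintype Θ] [DecidableEq Θ] (hΘ : 2 ≤ Fintype.card Θ)
    (β β' : Θ → Θ → ℝ)
    (hβ : ∀ i j, i ≠ j → 0 ≤ β i j) (hβ' : ∀ i j, i ≠ j → 0 ≤ β' i j)
    (heq : ∀ μ : Θ → Measure ℝ, (∀ i, IsProbabilityMeasure (μ i)) →
      (∀ i j, μ i ≪ μ j) →
      (∀ i j, Integrable (fun s => Real.log (((μ i).rnDeriv (μ j)) s).toReal) (μ i)) →
      ∑ i, ∑ j ∈ univ.erase i,
          β i j * ∫ s, Real.log (((μ i).rnDeriv (μ j)) s).toReal ∂(μ i)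
        = ∑ i, ∑ j ∈ univ.erase i,
          β' i j * ∫ s, Real.log (((μ i).rnDeriv (μ j)) s).toReal ∂(μ i)) :
    ∀ i j, i ≠ j → β i j = β' i j := by
  intro i j hij
  classical
  have hji : j ≠ i := hij.symm
  -- Step 1: the γ-weighted cost vanishes for all two-point families.
  have hS : ∀ x y : ℝ, 0 < x → x < 1 → 0 < y → y < 1 →
      ∑ k, ∑ l ∈ univ.erase k,
        (β k l - β' k l) * Dkl (Pfun i j x y k) (Pfun i j x y l) = 0 := by
    intro x y hx0 hx1 hy0 hy1
    have hm1 : ∀ k : Θ, 0 < Pfun i j x y k := fun k => Pfun_pos hx0 hy0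
    have hm2 : ∀ k : Θ, Pfun i j x y k < 1 := fun k => Pfun_lt hx1 hy1
    have h := heq (fun k => twoPt (Pfun i j x y k))
      (fun k => twoPt_prob (hm1 k) (hm2 k))
      (fun k l => twoPt_ac (hm1 k) (hm2 k) (hm1 l) (hm2 l))
      (fun k l => twoPt_logrn_integrable (hm1 k) (hm2 k) (hm1 l) (hm2 l))
    have hrw : ∀ c : Θ → Θ → ℝ,
        (∑ k, ∑ l ∈ univ.erase k, c k l *
          ∫ s, Real.log ((((fun k => twoPt (Pfun i j x y k)) k).rnDeriv
              ((fun k => twoPt (Pfun i j x y k)) l)) s).toReal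
            ∂((fun k => twoPt (Pfun i j x y k)) k))
        = ∑ k, ∑ l ∈ univ.erase k, c k l * Dkl (Pfun i j x y k) (Pfun i j x y l) := by
      intro c
      refine Finset.sum_congr rfl fun k _ => Finset.sum_congr rfl fun l _ => ?_
      rw [show ((fun k => twoPt (Pfun i j x y k)) k) = twoPt (Pfun i j x y k) from rfl,
        show ((fun k => twoPt (Pfun i j x y k)) l) = twoPt (Pfun i j x y l) from rfl,
        twoPt_integral (hm1 k) (hm2 k) (hm1 l) (hm2 l)]
    rw [hrw β, hrw β'] at h
    simp only [sub_mul, Finset.sum_sub_distrib]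
    rw [h, sub_self]
  -- Step 2: key functional equation.
  have hkey : ∀ x y : ℝ, 0 < x → x < 1 → 0 < y → y < 1 →
      (β i j - β' i j) * ((1/2 - x) * (Real.log y - Real.log (1-y)))
        + (β j i - β' j i) * ((1/2 - y) * (Real.log x - Real.log (1-x))) = 0 := by
    intro x y hx0 hx1 hy0 hy1
    have h1 := hS x y hx0 hx1 hy0 hy1
    have h2 := hS x (1/2) hx0 hx1 (by norm_num) (by norm_num)
    have h3 := hS (1/2) y (by norm_num) (by norm_num) hy0 hy1
    have hT : ∑ k, ∑ l ∈ univ.erase k, (β k l - β' k l) *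
        (Dkl (Pfun i j x y k) (Pfun i j x y l)
          - Dkl (Pfun i j x (1/2) k) (Pfun i j x (1/2) l)
          - Dkl (Pfun i j (1/2) y k) (Pfun i j (1/2) y l)) = 0 := by
      simp only [mul_sub, Finset.sum_sub_distrib]
      rw [h1, h2, h3]; ring
    have hBval : ∀ k l : Θ, l ≠ k →
        (Dkl (Pfun i j x y k) (Pfun i j x y l)
          - Dkl (Pfun i j x (1/2) k) (Pfun i j x (1/2) l)
          - Dkl (Pfun i j (1/2) y k) (Pfun i j (1/2) y l))
        = if k = i ∧ l = j then (1/2 - x) * (Real.log y - Real.log (1-y))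
          else if k = j ∧ l = i then (1/2 - y) * (Real.log x - Real.log (1-x))
          else 0 := by
      intro k l hlk
      rcases eq_or_ne k i with hki | hki
      · rcases hki.symm with rfl
        rcases eq_or_ne l j with hlj | hlj
        · rcases hlj.symm with rfl
          rw [Pfun_i, Pfun_i, Pfun_i, Pfun_j hji, Pfun_j hji, Pfun_j hji,
            if_pos ⟨rfl, rfl⟩]
          exact Dkl_bracket hx0 hx1 hy0 hy1
        · rw [Pfun_i, Pfun_i, Pfun_i, Pfun_other hlk hlj, Pfun_other hlk hlj,
            Pfun_other hlk hlj, if_neg (by tauto), if_neg (by tauto), Dkl_half_half]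
          ring
      · rcases eq_or_ne k j with hkj | hkj
        · rcases hkj.symm with rfl
          rcases eq_or_ne l i with hli | hli
          · rcases hli.symm with rfl
            rw [Pfun_j hji, Pfun_j hji, Pfun_j hji, Pfun_i, Pfun_i, Pfun_i,
              if_neg (by tauto), if_pos ⟨rfl, rfl⟩]
            have := Dkl_bracket hy0 hy1 hx0 hx1
            linarith
          · have hlj : l ≠ j := hlk
            rw [Pfun_j hji, Pfun_j hji, Pfun_j hji, Pfun_other hli hlj,
              Pfun_other hli hlj, Pfun_other hli hlj, if_neg (by tauto),
              if_neg (by tauto), Dkl_half_half]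
            ring
        · rw [Pfun_other hki hkj, Pfun_other hki hkj, Pfun_other hki hkj,
            if_neg (by tauto), if_neg (by tauto)]
          rcases eq_or_ne l i with hli | hli
          · rcases hli.symm with rfl
            rw [Pfun_i, Pfun_i, Pfun_i, Dkl_half_half]; ring
          · rcases eq_or_ne l j with hlj | hlj
            · rcases hlj.symm with rfl
              rw [Pfun_j hji, Pfun_j hji, Pfun_j hji, Dkl_half_half]; ring
            · rw [Pfun_other hli hlj, Pfun_other hli hlj, Pfun_other hli hlj,
                Dkl_half_half]; ring
    have hsum : ∑ k, ∑ l ∈ univ.erase k, (β k l - β' k l) *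
        (Dkl (Pfun i j x y k) (Pfun i j x y l)
          - Dkl (Pfun i j x (1/2) k) (Pfun i j x (1/2) l)
          - Dkl (Pfun i j (1/2) y k) (Pfun i j (1/2) y l))
        = (β i j - β' i j) * ((1/2 - x) * (Real.log y - Real.log (1-y)))
          + (β j i - β' j i) * ((1/2 - y) * (Real.log x - Real.log (1-x))) := by
      have hinner_i : ∑ l ∈ univ.erase i, (β i l - β' i l) *
          (Dkl (Pfun i j x y i) (Pfun i j x y l)
            - Dkl (Pfun i j x (1/2) i) (Pfun i j x (1/2) l)
            - Dkl (Pfun i j (1/2) y i) (Pfun i j (1/2) y l))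
          = (β i j - β' i j) * ((1/2 - x) * (Real.log y - Real.log (1-y))) := by
        rw [Finset.sum_eq_single_of_mem j (Finset.mem_erase.mpr ⟨hji, Finset.mem_univ j⟩)
          (fun l hl hlj => by
            rw [hBval i l (Finset.ne_of_mem_erase hl), if_neg (by tauto),
              if_neg (by tauto), mul_zero])]
        rw [hBval i j hji, if_pos ⟨rfl, rfl⟩]
      have hinner_j : ∑ l ∈ univ.erase j, (β j l - β' j l) *
          (Dkl (Pfun i j x y j) (Pfun i j x y l)
            - Dkl (Pfun i j x (1/2) j) (Pfun i j x (1/2) l)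
            - Dkl (Pfun i j (1/2) y j) (Pfun i j (1/2) y l))
          = (β j i - β' j i) * ((1/2 - y) * (Real.log x - Real.log (1-x))) := by
        rw [Finset.sum_eq_single_of_mem i (Finset.mem_erase.mpr ⟨hij, Finset.mem_univ i⟩)
          (fun l hl hli => by
            rw [hBval j l (Finset.ne_of_mem_erase hl), if_neg (by tauto),
              if_neg (by tauto), mul_zero])]
        rw [hBval j i hij, if_neg (by tauto), if_pos ⟨rfl, rfl⟩]
      have houter : ∀ k : Θ, k ≠ i → k ≠ j →
          ∑ l ∈ univ.erase k, (β k l - β' k l) *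
            (Dkl (Pfun i j x y k) (Pfun i j x y l)
              - Dkl (Pfun i j x (1/2) k) (Pfun i j x (1/2) l)
              - Dkl (Pfun i j (1/2) y k) (Pfun i j (1/2) y l)) = 0 := by
        intro k hki hkj
        refine Finset.sum_eq_zero fun l hl => ?_
        rw [hBval k l (Finset.ne_of_mem_erase hl), if_neg (by tauto),
          if_neg (by tauto), mul_zero]
      rw [← Finset.sum_subset (Finset.subset_univ ({i, j} : Finset Θ))
        (fun k _ hk => houter k (fun h => hk (by simp [h])) (fun h => hk (by simp [h])))]
      rw [Finset.sum_pair hij, hinner_i, hinner_j]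
    rw [hsum] at hT
    exact hT
  -- Step 3: numeric instantiations.
  have h1 := hkey (1/4) (1/4) (by norm_num) (by norm_num) (by norm_num) (by norm_num)
  have h2 := hkey (1/4) (1/10) (by norm_num) (by norm_num) (by norm_num) (by norm_num)
  have e1 : Real.log 3 * ((β i j - β' i j) + (β j i - β' j i)) = 0 := by
    linear_combination (-4 : ℝ) * h1 + ((β i j - β' i j) + (β j i - β' j i)) * log_c1
  have e2 : Real.log 3 * (5 * (β i j - β' i j) + 4 * (β j i - β' j i)) = 0 := by
    linear_combination (-10 : ℝ) * h2 + (5/2 : ℝ) * (β i j - β' i j) * log_c2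
      + (4 : ℝ) * (β j i - β' j i) * log_c1
  have hlog : Real.log 3 ≠ 0 := (Real.log_pos (by norm_num)).ne'
  have f1 : (β i j - β' i j) + (β j i - β' j i) = 0 :=
    (mul_eq_zero.mp e1).resolve_left hlog
  have f2 : 5 * (β i j - β' i j) + 4 * (β j i - β' j i) = 0 :=
    (mul_eq_zero.mp e2).resolve_left hlog
  linarith
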